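/- arXiv:1907.04162 — 2 statements merged into one kernel-verified Lean document; each statement's English description precedes it below -/
import Mathlib

section
/- Let μ ∈ ℝ, σ > 0, q > 0, δ > 0, r > 0, and let W^{(q)}, 𝕎^{(q)} be the explicit q-scale functions of the linear Brownian motion model. For x ≥ 0, with w^{(q)}(x;−z) = W^{(q)}(x+z) + δ∫₀ˣ 𝕎^{(q)}(x−y)W^{(q)′}(y+z)dy, one has ∫₀^∞ w^{(q)}(x;−z) (z/r) (2πσ²r)^{−1/2} e^{−(z−μr)²/(2σ²r)} dz = (σ²/2) 𝕎^{(q)}(x) [ (2/√(2πσ²r)) e^{−rμ²/(2σ²)} + ρ₂ e^{qr} − ρ e^{qr} Φ(−r√(μ²+2qσ²)/(σ√r)) ] + (e^{qr}/ρ^Y)(ρ₁^Y e^{ρ₂^Y x} + ρ₂^Y e^{−ρ₁^Y x}). -/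
open MeasureTheory Real

set_option maxHeartbeats 2000000

/- Linear Brownian motion model: X_t = μt + σB_t, Y_t = X_t − δt.  Explicit
   q-scale functions W^{(q)} and 𝕎^{(q)}; w^{(q)}(x;−z) is the refracted scale
   function; the integral of w^{(q)}(x;−z)(z/r) against the Gaussian density of
   X_r gives the Parisian refracted scale function V^{(q)}(x) for x ≥ 0. -/

noncomputable def rho1 (μ σ q : ℝ) : ℝ := (Real.sqrt (μ ^ 2 + 2 * q * σ ^ 2) + μ) / σ ^ 2

noncomputable def rho2 (μ σ q : ℝ) : ℝ := (Real.sqrt (μ ^ 2 + 2 * q * σ ^ 2) - μ) / σ ^ 2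

noncomputable def rho (μ σ q : ℝ) : ℝ := rho1 μ σ q + rho2 μ σ q

noncomputable def rho1Y (μ σ q δ : ℝ) : ℝ := rho1 (μ - δ) σ q

noncomputable def rho2Y (μ σ q δ : ℝ) : ℝ := rho2 (μ - δ) σ q

noncomputable def rhoY (μ σ q δ : ℝ) : ℝ := rho1Y μ σ q δ + rho2Y μ σ q δ

/-- The q-scale function W^{(q)} of X (its formula on [0,∞)). -/
noncomputable def Wq (μ σ q x : ℝ) : ℝ :=
  2 / (σ ^ 2 * rho μ σ q) *
    (Real.exp (rho2 μ σ q * x) - Real.exp (-(rho1 μ σ q) * x))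

/-- The q-scale function 𝕎^{(q)} of Y (its formula on [0,∞)). -/
noncomputable def WWq (μ σ q δ x : ℝ) : ℝ := Wq (μ - δ) σ q x

/-- The refracted scale function w^{(q)}(x;−z). -/
noncomputable def wq (μ σ q δ x z : ℝ) : ℝ :=
  Wq μ σ q (x + z) + δ * ∫ y in (0 : ℝ)..x, WWq μ σ q δ (x - y) * deriv (Wq μ σ q) (y + z)

/-- Standard normal cumulative distribution function. -/
noncomputable def stdNormalCDF (x : ℝ) : ℝ :=
  ∫ t in Set.Iic x, (Real.sqrt (2 * Real.pi))⁻¹ * Real.exp (-t ^ 2 / 2)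

/-! ### Auxiliary lemmas -/

lemma my_integral_exp_mul (c x : ℝ) (hc : c ≠ 0) :
    ∫ y in (0:ℝ)..x, Real.exp (c * y) = (Real.exp (c * x) - 1) / c := by
  have h : ∀ y : ℝ, HasDerivAt (fun y => Real.exp (c * y) / c) (Real.exp (c * y)) y := by
    intro y
    have h1 := (((hasDerivAt_id y).const_mul c).exp).div_const c
    refine h1.congr_deriv ?_
    simp only [id]; field_simp
  rw [intervalIntegral.integral_eq_sub_of_hasDerivAt (fun y _ => h y)
    ((Real.continuous_exp.comp (continuous_const.mul continuous_id)).intervalIntegrable _ _)]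
  simp [Real.exp_zero]
  ring

lemma hasDerivAt_Wq (μ σ q u : ℝ) :
    HasDerivAt (Wq μ σ q)
      (2 / (σ ^ 2 * rho μ σ q) *
        (rho2 μ σ q * Real.exp (rho2 μ σ q * u) + rho1 μ σ q * Real.exp (-(rho1 μ σ q) * u))) u := by
  have h2 := ((hasDerivAt_id u).const_mul (rho2 μ σ q)).exp
  have h1 := ((hasDerivAt_id u).const_mul (-(rho1 μ σ q))).exp
  have h := (h2.sub h1).const_mul (2 / (σ ^ 2 * rho μ σ q))
  simp only [id_eq] at h
  refine h.congr_deriv ?_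
  ring_nf

lemma deriv_Wq (μ σ q : ℝ) (u : ℝ) :
    deriv (Wq μ σ q) u = 2 / (σ ^ 2 * rho μ σ q) *
      (rho2 μ σ q * Real.exp (rho2 μ σ q * u) + rho1 μ σ q * Real.exp (-(rho1 μ σ q) * u)) :=
  (hasDerivAt_Wq μ σ q u).deriv

lemma g_integrable (m v : ℝ) (hv : 0 < v) :
    Integrable (fun z : ℝ => Real.exp (-(z - m) ^ 2 / (2 * v))) := by
  have h : Integrable (fun z : ℝ => Real.exp (-(1 / (2 * v)) * z ^ 2)) :=
    integrable_exp_neg_mul_sq (by positivity)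
  have h2 := h.comp_sub_right m
  have heq : (fun z : ℝ => Real.exp (-(z - m) ^ 2 / (2 * v)))
      = fun z => Real.exp (-(1 / (2 * v)) * (z - m) ^ 2) := by
    funext z; congr 1; field_simp
  rw [heq]; exact h2

lemma gz_integrable (m v : ℝ) (hv : 0 < v) :
    Integrable (fun z : ℝ => (z - m) * Real.exp (-(z - m) ^ 2 / (2 * v))) := by
  have h : Integrable (fun z : ℝ => z * Real.exp (-(1 / (2 * v)) * z ^ 2)) :=
    integrable_mul_exp_neg_mul_sq (by positivity)
  have h2 := h.comp_sub_right m
  have heq : (fun z : ℝ => (z - m) * Real.exp (-(z - m) ^ 2 / (2 * v)))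
      = fun z => (z - m) * Real.exp (-(1 / (2 * v)) * (z - m) ^ 2) := by
    funext z; congr 2; field_simp
  rw [heq]; exact h2

lemma zg_integrable (m v : ℝ) (hv : 0 < v) :
    Integrable (fun z : ℝ => z * Real.exp (-(z - m) ^ 2 / (2 * v))) := by
  have h := (gz_integrable m v hv).add ((g_integrable m v hv).const_mul m)
  have heq : (fun z : ℝ => z * Real.exp (-(z - m) ^ 2 / (2 * v)))
      = fun z => (z - m) * Real.exp (-(z - m) ^ 2 / (2 * v)) + m * Real.exp (-(z - m) ^ 2 / (2 * v)) := by
    funext z; ring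
  rw [heq]; exact h

lemma gauss_mom (m v : ℝ) (hv : 0 < v) :
    ∫ z in Set.Ioi (0:ℝ), (z - m) * Real.exp (-(z - m) ^ 2 / (2 * v))
      = v * Real.exp (-m ^ 2 / (2 * v)) := by
  have hderiv : ∀ z ∈ Set.Ici (0:ℝ), HasDerivAt (fun z => -v * Real.exp (-(z - m) ^ 2 / (2 * v)))
      ((z - m) * Real.exp (-(z - m) ^ 2 / (2 * v))) z := by
    intro z _
    have h1 : HasDerivAt (fun z : ℝ => z - m) 1 z := (hasDerivAt_id z).sub_const m
    have h2 := (((h1.pow 2).neg.div_const (2 * v)).exp).const_mul (-v)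
    refine h2.congr_deriv ?_
    simp only [Pi.neg_apply, Pi.pow_apply]; field_simp
    ring
  have htend : Filter.Tendsto (fun z : ℝ => -v * Real.exp (-(z - m) ^ 2 / (2 * v)))
      Filter.atTop (nhds 0) := by
    have h1 : Filter.Tendsto (fun z : ℝ => z - m) Filter.atTop Filter.atTop :=
      Filter.tendsto_atTop_add_const_right _ (-m) Filter.tendsto_id
    have h2 : Filter.Tendsto (fun z : ℝ => (z - m) ^ 2) Filter.atTop Filter.atTop :=
      (Filter.tendsto_pow_atTop two_ne_zero).comp h1
    have h3 : Filter.Tendsto (fun z : ℝ => -(z - m) ^ 2 / (2 * v)) Filter.atTop Filter.atBot := by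
      apply Filter.Tendsto.atBot_div_const (by positivity)
      exact Filter.tendsto_neg_atTop_atBot.comp h2
    have h4 := Real.tendsto_exp_atBot.comp h3
    have := h4.const_mul (-v)
    simpa using this
  have := integral_Ioi_of_hasDerivAt_of_tendsto' hderiv
    ((gz_integrable m v hv).integrableOn) htend
  rw [this]
  ring_nf

/-- shift of a set integral over Ioi -/
lemma integral_Ioi_shift (f : ℝ → ℝ) (m : ℝ) :
    ∫ z in Set.Ioi (0:ℝ), f (z - m) = ∫ z in Set.Ioi (-m), f z := by
  rw [← integral_indicator measurableSet_Ioi, ← integral_indicator measurableSet_Ioi]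
  have heq : (Set.Ioi (0:ℝ)).indicator (fun z => f (z - m))
      = fun z => (Set.Ioi (-m)).indicator f (z - m) := by
    funext z
    simp only [Set.indicator_apply, Set.mem_Ioi]
    by_cases h : 0 < z
    · rw [if_pos h, if_pos (by linarith)]
    · rw [if_neg h, if_neg (by intro hc; exact h (by linarith))]
  rw [heq, integral_sub_right_eq_self]

lemma std_gauss_Ioi (c : ℝ) :
    ∫ t in Set.Ioi (-c), Real.exp (-t ^ 2 / 2) = Real.sqrt (2 * Real.pi) * stdNormalCDF c := by
  have h := integral_comp_neg_Iic c (fun t : ℝ => Real.exp (-t ^ 2 / 2))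
  have heq : ∀ t : ℝ, Real.exp (-(-t) ^ 2 / 2) = Real.exp (-t ^ 2 / 2) := by
    intro t; congr 1; ring
  simp only [heq] at h
  rw [← h]
  unfold stdNormalCDF
  rw [integral_const_mul]
  rw [← mul_assoc, mul_inv_cancel₀ (by positivity), one_mul]

lemma gauss_tail (m v : ℝ) (hv : 0 < v) :
    ∫ z in Set.Ioi (0:ℝ), Real.exp (-(z - m) ^ 2 / (2 * v))
      = Real.sqrt (2 * Real.pi * v) * stdNormalCDF (m / Real.sqrt v) := by
  have hsv : 0 < Real.sqrt v := Real.sqrt_pos.mpr hv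
  have hscale := integral_comp_mul_left_Ioi
    (fun z => Real.exp (-(z - m) ^ 2 / (2 * v))) 0 hsv
  simp only [mul_zero, smul_eq_mul] at hscale
  have heq : ∀ x : ℝ, Real.exp (-(Real.sqrt v * x - m) ^ 2 / (2 * v))
      = Real.exp (-(x - m / Real.sqrt v) ^ 2 / 2) := by
    intro x
    congr 1
    have h1 : Real.sqrt v ^ 2 = v := Real.sq_sqrt hv.le
    have hsv : Real.sqrt v ≠ 0 := by positivity
    have hfac : Real.sqrt v * x - m = Real.sqrt v * (x - m / Real.sqrt v) := by
      field_simp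
    rw [hfac, mul_pow, h1]
    rw [div_eq_div_iff (by positivity) (by norm_num)]
    ring
  simp only [heq] at hscale
  have h2 : ∫ x in Set.Ioi (0:ℝ), Real.exp (-(x - m / Real.sqrt v) ^ 2 / 2)
      = Real.sqrt (2 * Real.pi) * stdNormalCDF (m / Real.sqrt v) := by
    rw [integral_Ioi_shift (fun t => Real.exp (-t ^ 2 / 2)) (m / Real.sqrt v)]
    exact std_gauss_Ioi _
  rw [h2] at hscale
  have : (∫ z in Set.Ioi (0:ℝ), Real.exp (-(z - m) ^ 2 / (2 * v)))
      = Real.sqrt v * (Real.sqrt (2 * Real.pi) * stdNormalCDF (m / Real.sqrt v)) := by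
    rw [hscale]; field_simp
  rw [this, ← mul_assoc]
  congr 1
  rw [← Real.sqrt_mul (by positivity)]
  ring_nf

lemma stdNormalCDF_add_neg (c : ℝ) : stdNormalCDF c + stdNormalCDF (-c) = 1 := by
  have hint : Integrable (fun t : ℝ => (Real.sqrt (2 * Real.pi))⁻¹ * Real.exp (-t ^ 2 / 2)) := by
    have h : Integrable (fun t : ℝ => Real.exp (-(1/2 : ℝ) * t ^ 2)) :=
      integrable_exp_neg_mul_sq (by norm_num)
    have heq : (fun t : ℝ => (Real.sqrt (2 * Real.pi))⁻¹ * Real.exp (-t ^ 2 / 2))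
        = fun t => (Real.sqrt (2 * Real.pi))⁻¹ * Real.exp (-(1/2 : ℝ) * t ^ 2) := by
      funext t; congr 2; ring
    rw [heq]; exact h.const_mul _
  have hneg : stdNormalCDF (-c) = ∫ t in Set.Ioi c, (Real.sqrt (2 * Real.pi))⁻¹ * Real.exp (-t ^ 2 / 2) := by
    have h := integral_comp_neg_Iic (-c) (fun t : ℝ => (Real.sqrt (2 * Real.pi))⁻¹ * Real.exp (-t ^ 2 / 2))
    have heq : ∀ t : ℝ, (Real.sqrt (2 * Real.pi))⁻¹ * Real.exp (-(-t) ^ 2 / 2)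
        = (Real.sqrt (2 * Real.pi))⁻¹ * Real.exp (-t ^ 2 / 2) := by
      intro t; congr 2; ring
    simp only [heq] at h
    rw [stdNormalCDF, h, neg_neg]
  rw [stdNormalCDF, hneg, intervalIntegral.integral_Iic_add_Ioi hint.integrableOn hint.integrableOn]
  rw [integral_const_mul]
  have hgauss : ∫ t : ℝ, Real.exp (-t ^ 2 / 2) = Real.sqrt (2 * Real.pi) := by
    have h := integral_gaussian (1/2 : ℝ)
    have heq : (fun t : ℝ => Real.exp (-(1/2 : ℝ) * t ^ 2)) = fun t => Real.exp (-t ^ 2 / 2) := by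
      funext t; congr 1; ring
    rw [heq] at h
    rw [h]
    congr 1
    field_simp
  rw [hgauss, inv_mul_cancel₀ (by positivity)]

lemma gauss_first_moment (m v : ℝ) (hv : 0 < v) :
    ∫ z in Set.Ioi (0:ℝ), z * Real.exp (-(z - m) ^ 2 / (2 * v))
      = v * Real.exp (-m ^ 2 / (2 * v))
        + m * (Real.sqrt (2 * Real.pi * v) * stdNormalCDF (m / Real.sqrt v)) := by
  have hsplit : ∀ z ∈ Set.Ioi (0:ℝ), z * Real.exp (-(z - m) ^ 2 / (2 * v))
      = (z - m) * Real.exp (-(z - m) ^ 2 / (2 * v)) + m * Real.exp (-(z - m) ^ 2 / (2 * v)) :=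
    fun z _ => by ring
  rw [setIntegral_congr_fun measurableSet_Ioi hsplit]
  rw [integral_add ((gz_integrable m v hv).integrableOn)
    (((g_integrable m v hv).const_mul m).integrableOn)]
  rw [integral_const_mul, gauss_mom m v hv, gauss_tail m v hv]

lemma rho1_pos (μ σ q : ℝ) (hσ : 0 < σ) (hq : 0 < q) : 0 < rho1 μ σ q := by
  rw [rho1]
  apply div_pos _ (by positivity)
  have h0 : 0 ≤ Real.sqrt (μ^2+2*q*σ^2) := Real.sqrt_nonneg _
  have h2 : Real.sqrt (μ^2+2*q*σ^2)^2 = μ^2+2*q*σ^2 := Real.sq_sqrt (by positivity)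
  nlinarith [mul_pos hq (pow_pos hσ 2)]

lemma rho2_pos (μ σ q : ℝ) (hσ : 0 < σ) (hq : 0 < q) : 0 < rho2 μ σ q := by
  rw [rho2]
  apply div_pos _ (by positivity)
  have h0 : 0 ≤ Real.sqrt (μ^2+2*q*σ^2) := Real.sqrt_nonneg _
  have h2 : Real.sqrt (μ^2+2*q*σ^2)^2 = μ^2+2*q*σ^2 := Real.sq_sqrt (by positivity)
  nlinarith [mul_pos hq (pow_pos hσ 2)]

lemma fac2 (μ σ q δ : ℝ) (hσ : 0 < σ) (hq : 0 < q) :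
    δ * rho2 μ σ q = -(σ^2/2) * ((rho2 μ σ q - rho2Y μ σ q δ) * (rho2 μ σ q + rho1Y μ σ q δ)) := by
  have h1 : Real.sqrt (μ^2+2*q*σ^2)^2 = μ^2+2*q*σ^2 := Real.sq_sqrt (by positivity)
  have h2 : Real.sqrt ((μ-δ)^2+2*q*σ^2)^2 = (μ-δ)^2+2*q*σ^2 := Real.sq_sqrt (by positivity)
  have hσ' : σ ≠ 0 := hσ.ne'
  simp only [rho2, rho2Y, rho1Y, rho1]
  field_simp
  linear_combination h1 - h2

lemma fac1 (μ σ q δ : ℝ) (hσ : 0 < σ) (hq : 0 < q) :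
    δ * rho1 μ σ q = (σ^2/2) * ((rho1 μ σ q + rho2Y μ σ q δ) * (rho1 μ σ q - rho1Y μ σ q δ)) := by
  have h1 : Real.sqrt (μ^2+2*q*σ^2)^2 = μ^2+2*q*σ^2 := Real.sq_sqrt (by positivity)
  have h2 : Real.sqrt ((μ-δ)^2+2*q*σ^2)^2 = (μ-δ)^2+2*q*σ^2 := Real.sq_sqrt (by positivity)
  have hσ' : σ ≠ 0 := hσ.ne'
  simp only [rho1, rho2Y, rho1Y, rho2]
  field_simp
  linear_combination h2 - h1

lemma core_closed (r1 r2 r1Y r2Y δ σ x z : ℝ)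
    (hσ : σ ≠ 0) (hrpos : 0 < r1 + r2) (hYpos : 0 < r1Y + r2Y)
    (hc1 : r2 - r2Y ≠ 0) (hc2 : 0 < r2 + r1Y) (hc3 : 0 < r1 + r2Y) (hc4 : r1 - r1Y ≠ 0)
    (hfac2 : δ * r2 = -(σ^2/2) * ((r2 - r2Y) * (r2 + r1Y)))
    (hfac1 : δ * r1 = (σ^2/2) * ((r1 + r2Y) * (r1 - r1Y))) :
    2/(σ^2*(r1+r2)) * (Real.exp (r2*(x+z)) - Real.exp (-r1*(x+z)))
      + δ * ∫ y in (0:ℝ)..x,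
          (2/(σ^2*(r1Y+r2Y)) * (Real.exp (r2Y*(x-y)) - Real.exp (-r1Y*(x-y))))
            * (2/(σ^2*(r1+r2)) * (r2 * Real.exp (r2*(y+z)) + r1 * Real.exp (-r1*(y+z))))
    = (σ^2/2 * (2/(σ^2*(r1+r2))) * (2/(σ^2*(r1Y+r2Y))) *
        ((r2+r1Y) * Real.exp (r2Y*x) - (r2-r2Y) * Real.exp (-r1Y*x))) * Real.exp (r2*z)
      + (σ^2/2 * (2/(σ^2*(r1+r2))) * (2/(σ^2*(r1Y+r2Y))) *
        ((r1-r1Y) * Real.exp (r2Y*x) - (r1+r2Y) * Real.exp (-r1Y*x))) * Real.exp (-r1*z) := by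
  set A := 2/(σ^2*(r1+r2)) with hA
  set B := 2/(σ^2*(r1Y+r2Y)) with hB
  have hii : ∀ K c : ℝ, IntervalIntegrable (fun y => K * Real.exp (c*y)) volume 0 x :=
    fun K c => ((continuous_const.mul (Real.continuous_exp.comp
      (continuous_const.mul continuous_id)))).intervalIntegrable _ _
  have hig : Set.EqOn
      (fun y => (B * (Real.exp (r2Y*(x-y)) - Real.exp (-r1Y*(x-y))))
        * (A * (r2 * Real.exp (r2*(y+z)) + r1 * Real.exp (-r1*(y+z)))))
      (fun y => (A*B*r2*Real.exp (r2Y*x)*Real.exp (r2*z)) * Real.exp ((r2-r2Y)*y)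
        + ((-(A*B*r2*Real.exp (-r1Y*x)*Real.exp (r2*z))) * Real.exp ((r2+r1Y)*y)
        + ((A*B*r1*Real.exp (r2Y*x)*Real.exp (-r1*z)) * Real.exp ((-(r1+r2Y))*y)
        + (-(A*B*r1*Real.exp (-r1Y*x)*Real.exp (-r1*z))) * Real.exp ((r1Y-r1)*y))))
      (Set.uIcc 0 x) := by
    intro y _
    simp only [sub_mul, add_mul, mul_add, mul_sub, neg_mul, neg_add_rev,
      Real.exp_add, Real.exp_sub, Real.exp_neg]
    field_simp
    ring
  rw [intervalIntegral.integral_congr hig]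
  rw [intervalIntegral.integral_add (hii _ _) ((hii _ _).add ((hii _ _).add (hii _ _))),
      intervalIntegral.integral_add (hii _ _) ((hii _ _).add (hii _ _)),
      intervalIntegral.integral_add (hii _ _) (hii _ _)]
  have hc2' : r2 + r1Y ≠ 0 := hc2.ne'
  have hc3' : -(r1 + r2Y) ≠ 0 := neg_ne_zero.mpr hc3.ne'
  have hc4' : r1Y - r1 ≠ 0 := fun h => hc4 (by linarith [sub_eq_zero.mp h])
  have hintexp : ∀ K c : ℝ, c ≠ 0 →
      (∫ y in (0:ℝ)..x, K * Real.exp (c*y)) = K * ((Real.exp (c*x) - 1)/c) := by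
    intro K c hc
    rw [intervalIntegral.integral_const_mul, my_integral_exp_mul c x hc]
  rw [hintexp _ _ hc1, hintexp _ _ hc2', hintexp _ _ hc3', hintexp _ _ hc4']
  rw [show r1Y - r1 = -(r1 - r1Y) by ring, div_neg, div_neg, ← neg_div, ← neg_div, neg_sub, neg_sub]
  have hd1 : δ * r2 / (r2 - r2Y) = -(σ^2/2) * (r2 + r1Y) := by
    rw [div_eq_iff hc1]; linear_combination hfac2
  have hd2 : δ * r2 / (r2 + r1Y) = -(σ^2/2) * (r2 - r2Y) := by
    rw [div_eq_iff hc2']; linear_combination hfac2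
  have hd3 : δ * r1 / (r1 + r2Y) = (σ^2/2) * (r1 - r1Y) := by
    rw [div_eq_iff hc3.ne']; linear_combination hfac1
  have hd4 : δ * r1 / (r1 - r1Y) = (σ^2/2) * (r1 + r2Y) := by
    rw [div_eq_iff hc4]; linear_combination hfac1
  calc A * (Real.exp (r2*(x+z)) - Real.exp (-r1*(x+z)))
        + δ * ((A*B*r2*Real.exp (r2Y*x)*Real.exp (r2*z)) * ((Real.exp ((r2-r2Y)*x) - 1)/(r2-r2Y))
          + ((-(A*B*r2*Real.exp (-r1Y*x)*Real.exp (r2*z))) * ((Real.exp ((r2+r1Y)*x) - 1)/(r2+r1Y))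
          + ((A*B*r1*Real.exp (r2Y*x)*Real.exp (-r1*z)) * ((1 - Real.exp ((-(r1+r2Y))*x))/(r1+r2Y))
          + (-(A*B*r1*Real.exp (-r1Y*x)*Real.exp (-r1*z))) * ((1 - Real.exp ((-(r1-r1Y))*x))/(r1-r1Y)))))
      = A * (Real.exp (r2*(x+z)) - Real.exp (-r1*(x+z)))
        + ((δ * r2 / (r2 - r2Y)) * (A*B*Real.exp (r2Y*x)*Real.exp (r2*z)*(Real.exp ((r2-r2Y)*x) - 1))
          + (δ * r2 / (r2 + r1Y)) * (-(A*B*Real.exp (-r1Y*x)*Real.exp (r2*z)*(Real.exp ((r2+r1Y)*x) - 1)))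
          + (δ * r1 / (r1 + r2Y)) * (A*B*Real.exp (r2Y*x)*Real.exp (-r1*z)*(1 - Real.exp ((-(r1+r2Y))*x)))
          + (δ * r1 / (r1 - r1Y)) * (-(A*B*Real.exp (-r1Y*x)*Real.exp (-r1*z)*(1 - Real.exp ((-(r1-r1Y))*x))))) := by
        ring
    _ = A * (Real.exp (r2*(x+z)) - Real.exp (-r1*(x+z)))
        + ((-(σ^2/2) * (r2 + r1Y)) * (A*B*Real.exp (r2Y*x)*Real.exp (r2*z)*(Real.exp ((r2-r2Y)*x) - 1))
          + (-(σ^2/2) * (r2 - r2Y)) * (-(A*B*Real.exp (-r1Y*x)*Real.exp (r2*z)*(Real.exp ((r2+r1Y)*x) - 1)))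
          + ((σ^2/2) * (r1 - r1Y)) * (A*B*Real.exp (r2Y*x)*Real.exp (-r1*z)*(1 - Real.exp ((-(r1+r2Y))*x)))
          + ((σ^2/2) * (r1 + r2Y)) * (-(A*B*Real.exp (-r1Y*x)*Real.exp (-r1*z)*(1 - Real.exp ((-(r1-r1Y))*x))))) := by
        rw [hd1, hd2, hd3, hd4]
    _ = (σ^2/2 * A * B *
          ((r2+r1Y) * Real.exp (r2Y*x) - (r2-r2Y) * Real.exp (-r1Y*x))) * Real.exp (r2*z)
        + (σ^2/2 * A * B *
          ((r1-r1Y) * Real.exp (r2Y*x) - (r1+r2Y) * Real.exp (-r1Y*x))) * Real.exp (-r1*z) := by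
        have hg1 : Real.exp (r2Y*x) * Real.exp ((r2-r2Y)*x) = Real.exp (r2*x) := by
          rw [← Real.exp_add]; congr 1; ring
        have hg2 : Real.exp (-r1Y*x) * Real.exp ((r2+r1Y)*x) = Real.exp (r2*x) := by
          rw [← Real.exp_add]; congr 1; ring
        have hg3 : Real.exp (r2Y*x) * Real.exp ((-(r1+r2Y))*x) = Real.exp (-r1*x) := by
          rw [← Real.exp_add]; congr 1; ring
        have hg4 : Real.exp (-r1Y*x) * Real.exp ((-(r1-r1Y))*x) = Real.exp (-r1*x) := by
          rw [← Real.exp_add]; congr 1; ring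
        have hBval : σ^2/2 * B * (r1Y+r2Y) = 1 := by
          rw [hB]; field_simp
        have hg5 : Real.exp (r2*(x+z)) = Real.exp (r2*x) * Real.exp (r2*z) := by
          rw [← Real.exp_add]; congr 1; ring
        have hg6 : Real.exp (-r1*(x+z)) = Real.exp (-r1*x) * Real.exp (-r1*z) := by
          rw [← Real.exp_add]; congr 1; ring
        linear_combination A*hg5 - A*hg6 + (-(σ^2/2)*(r2+r1Y)*A*B*Real.exp (r2*z))*hg1
          + ((σ^2/2)*(r2-r2Y)*A*B*Real.exp (r2*z))*hg2
          + (-(σ^2/2)*(r1-r1Y)*A*B*Real.exp (-r1*z))*hg3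
          + ((σ^2/2)*(r1+r2Y)*A*B*Real.exp (-r1*z))*hg4
          + (A*Real.exp (-r1*x)*Real.exp (-r1*z) - A*Real.exp (r2*x)*Real.exp (r2*z))*hBval

lemma wq_closed (μ σ q δ : ℝ) (hσ : 0 < σ) (hq : 0 < q) (hδ : 0 < δ) (x : ℝ) : ∀ z : ℝ,
    wq μ σ q δ x z =
      (σ^2/2 * (2/(σ^2*(rho1 μ σ q + rho2 μ σ q))) * (2/(σ^2*(rho1Y μ σ q δ + rho2Y μ σ q δ))) *
        ((rho2 μ σ q + rho1Y μ σ q δ) * Real.exp (rho2Y μ σ q δ * x)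
          - (rho2 μ σ q - rho2Y μ σ q δ) * Real.exp (-(rho1Y μ σ q δ) * x))) * Real.exp (rho2 μ σ q * z)
      + (σ^2/2 * (2/(σ^2*(rho1 μ σ q + rho2 μ σ q))) * (2/(σ^2*(rho1Y μ σ q δ + rho2Y μ σ q δ))) *
        ((rho1 μ σ q - rho1Y μ σ q δ) * Real.exp (rho2Y μ σ q δ * x)
          - (rho1 μ σ q + rho2Y μ σ q δ) * Real.exp (-(rho1Y μ σ q δ) * x))) * Real.exp (-(rho1 μ σ q) * z) := by
  intro z
  have h1p := rho1_pos μ σ q hσ hq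
  have h2p := rho2_pos μ σ q hσ hq
  have h1Yp : 0 < rho1Y μ σ q δ := rho1_pos (μ-δ) σ q hσ hq
  have h2Yp : 0 < rho2Y μ σ q δ := rho2_pos (μ-δ) σ q hσ hq
  have hfac2 := fac2 μ σ q δ hσ hq
  have hfac1 := fac1 μ σ q δ hσ hq
  have hc1 : rho2 μ σ q - rho2Y μ σ q δ ≠ 0 := by
    intro h
    rw [h, zero_mul, mul_zero] at hfac2
    exact absurd hfac2 (mul_pos hδ h2p).ne'
  have hc4 : rho1 μ σ q - rho1Y μ σ q δ ≠ 0 := by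
    intro h
    rw [h, mul_zero, mul_zero] at hfac1
    exact absurd hfac1 (mul_pos hδ h1p).ne'
  have hcore := core_closed (rho1 μ σ q) (rho2 μ σ q) (rho1Y μ σ q δ) (rho2Y μ σ q δ) δ σ x z
    hσ.ne' (add_pos h1p h2p) (add_pos h1Yp h2Yp) hc1 (add_pos h2p h1Yp) (add_pos h1p h2Yp) hc4
    hfac2 hfac1
  have hWq : ∀ u : ℝ, Wq μ σ q u = 2/(σ^2*(rho1 μ σ q + rho2 μ σ q)) *
      (Real.exp (rho2 μ σ q * u) - Real.exp (-(rho1 μ σ q) * u)) := by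
    intro u; simp only [Wq, rho]
  have hWWq : ∀ u : ℝ, WWq μ σ q δ u = 2/(σ^2*(rho1Y μ σ q δ + rho2Y μ σ q δ)) *
      (Real.exp (rho2Y μ σ q δ * u) - Real.exp (-(rho1Y μ σ q δ) * u)) := by
    intro u; simp only [WWq, Wq, rho, rho1Y, rho2Y]
  have hderiv : ∀ u : ℝ, deriv (Wq μ σ q) u = 2/(σ^2*(rho1 μ σ q + rho2 μ σ q)) *
      (rho2 μ σ q * Real.exp (rho2 μ σ q * u) + rho1 μ σ q * Real.exp (-(rho1 μ σ q) * u)) := by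
    intro u; rw [deriv_Wq]; simp only [rho]
  simp only [wq]
  simp only [hderiv]
  simp only [hWq, hWWq]
  convert hcore using 4 <;> ring_nf

/-- The abstract final identity. -/
lemma final_core (r1 r2 r1Y r2Y sD σ r : ℝ) (F2 F1 Q g GG P S : ℝ)
    (hσ : σ ≠ 0) (hr : r ≠ 0) (hS : S ≠ 0) (hY : r1Y + r2Y ≠ 0) (hX : r1 + r2 ≠ 0)
    (hQG : Q * g = GG) (hsum : σ^2*(r1+r2) = 2*sD) :
    (σ^2/2 * (2/(σ^2*(r1+r2))) * (2/(σ^2*(r1Y+r2Y))) * ((r2+r1Y)*F2 - (r2-r2Y)*F1)) * Q / r * S⁻¹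
        * ((σ^2*r) * g + (r*sD) * (S * (1 - P)))
      + (σ^2/2 * (2/(σ^2*(r1+r2))) * (2/(σ^2*(r1Y+r2Y))) * ((r1-r1Y)*F2 - (r1+r2Y)*F1)) * Q / r * S⁻¹
        * ((σ^2*r) * g + (-(r*sD)) * (S * P))
      = σ^2/2 * (2/(σ^2*(r1Y+r2Y)) * (F2 - F1)) * (2/S * GG + r2*Q - (r1+r2)*Q*P)
        + Q/(r1Y+r2Y) * (r1Y*F2 + r2Y*F1) := by
  subst hQG
  have hsD : sD = σ^2*(r1+r2)/2 := by linarith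
  subst hsD
  field_simp
  ring

theorem parisian_scale_function_brownian_nonneg (μ σ q δ r : ℝ) (hσ : 0 < σ) (hq : 0 < q)
    (hδ : 0 < δ) (hr : 0 < r) (x : ℝ) (hx : 0 ≤ x) :
    (∫ z in Set.Ioi (0 : ℝ),
        wq μ σ q δ x z * (z / r) * (Real.sqrt (2 * Real.pi * σ ^ 2 * r))⁻¹ *
          Real.exp (-(z - μ * r) ^ 2 / (2 * σ ^ 2 * r)))
      = σ ^ 2 / 2 * WWq μ σ q δ x *
          (2 / Real.sqrt (2 * Real.pi * σ ^ 2 * r) * Real.exp (-(r * μ ^ 2) / (2 * σ ^ 2)) +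
            rho2 μ σ q * Real.exp (q * r) -
            rho μ σ q * Real.exp (q * r) *
              stdNormalCDF (-(r * Real.sqrt (μ ^ 2 + 2 * q * σ ^ 2)) / (σ * Real.sqrt r))) +
        Real.exp (q * r) / rhoY μ σ q δ *
          (rho1Y μ σ q δ * Real.exp (rho2Y μ σ q δ * x) +
            rho2Y μ σ q δ * Real.exp (-(rho1Y μ σ q δ) * x)) := by
  have hσ2r : (0:ℝ) < σ^2*r := by positivity
  have hσ' : σ ≠ 0 := hσ.ne'
  have hr' : r ≠ 0 := hr.ne'
  set sD := Real.sqrt (μ ^ 2 + 2 * q * σ ^ 2) with hsDdef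
  have hsD2 : sD^2 = μ^2+2*q*σ^2 := Real.sq_sqrt (by positivity)
  have hσr1 : σ^2 * rho1 μ σ q = sD + μ := by rw [rho1, hsDdef]; field_simp
  have hσr2 : σ^2 * rho2 μ σ q = sD - μ := by rw [rho2, hsDdef]; field_simp
  have h1p := rho1_pos μ σ q hσ hq
  have h2p := rho2_pos μ σ q hσ hq
  have h1Yp : 0 < rho1Y μ σ q δ := rho1_pos (μ-δ) σ q hσ hq
  have h2Yp : 0 < rho2Y μ σ q δ := rho2_pos (μ-δ) σ q hσ hq
  have hmerge2 : ∀ z : ℝ, Real.exp (rho2 μ σ q * z) * Real.exp (-(z - μ*r)^2/(2*σ^2*r))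
      = Real.exp (q*r) * Real.exp (-(z - r*sD)^2/(2*(σ^2*r))) := by
    intro z
    rw [← Real.exp_add, ← Real.exp_add]
    congr 1
    field_simp
    linear_combination (2*z*r)*hσr2 + r^2*hsD2
  have hmerge1 : ∀ z : ℝ, Real.exp (-(rho1 μ σ q) * z) * Real.exp (-(z - μ*r)^2/(2*σ^2*r))
      = Real.exp (q*r) * Real.exp (-(z - (-(r*sD)))^2/(2*(σ^2*r))) := by
    intro z
    rw [← Real.exp_add, ← Real.exp_add]
    congr 1
    field_simp
    linear_combination (-(2*z*r))*hσr1 + r^2*hsD2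
  have hQG : Real.exp (q*r) * Real.exp (-(r*sD)^2/(2*(σ^2*r))) = Real.exp (-(r*μ^2)/(2*σ^2)) := by
    rw [← Real.exp_add]
    congr 1
    field_simp
    linear_combination (-1)*hsD2
  have hwq := wq_closed μ σ q δ hσ hq hδ x
  have hpt : ∀ z : ℝ,
      wq μ σ q δ x z * (z / r) * (Real.sqrt (2 * Real.pi * σ ^ 2 * r))⁻¹ *
          Real.exp (-(z - μ * r) ^ 2 / (2 * σ ^ 2 * r))
      = ((σ^2/2 * (2/(σ^2*(rho1 μ σ q + rho2 μ σ q))) * (2/(σ^2*(rho1Y μ σ q δ + rho2Y μ σ q δ))) *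
            ((rho2 μ σ q + rho1Y μ σ q δ) * Real.exp (rho2Y μ σ q δ * x)
              - (rho2 μ σ q - rho2Y μ σ q δ) * Real.exp (-(rho1Y μ σ q δ) * x)))
          * Real.exp (q*r) / r * (Real.sqrt (2 * Real.pi * σ ^ 2 * r))⁻¹)
          * (z * Real.exp (-(z - r*sD)^2/(2*(σ^2*r))))
        + ((σ^2/2 * (2/(σ^2*(rho1 μ σ q + rho2 μ σ q))) * (2/(σ^2*(rho1Y μ σ q δ + rho2Y μ σ q δ))) *
            ((rho1 μ σ q - rho1Y μ σ q δ) * Real.exp (rho2Y μ σ q δ * x)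
              - (rho1 μ σ q + rho2Y μ σ q δ) * Real.exp (-(rho1Y μ σ q δ) * x)))
          * Real.exp (q*r) / r * (Real.sqrt (2 * Real.pi * σ ^ 2 * r))⁻¹)
          * (z * Real.exp (-(z - (-(r*sD)))^2/(2*(σ^2*r)))) := by
    intro z
    rw [hwq z]
    linear_combination
      (z/r * (Real.sqrt (2 * Real.pi * σ ^ 2 * r))⁻¹ *
        (σ^2/2 * (2/(σ^2*(rho1 μ σ q + rho2 μ σ q))) * (2/(σ^2*(rho1Y μ σ q δ + rho2Y μ σ q δ))) *
          ((rho2 μ σ q + rho1Y μ σ q δ) * Real.exp (rho2Y μ σ q δ * x)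
            - (rho2 μ σ q - rho2Y μ σ q δ) * Real.exp (-(rho1Y μ σ q δ) * x)))) * hmerge2 z
      + (z/r * (Real.sqrt (2 * Real.pi * σ ^ 2 * r))⁻¹ *
        (σ^2/2 * (2/(σ^2*(rho1 μ σ q + rho2 μ σ q))) * (2/(σ^2*(rho1Y μ σ q δ + rho2Y μ σ q δ))) *
          ((rho1 μ σ q - rho1Y μ σ q δ) * Real.exp (rho2Y μ σ q δ * x)
            - (rho1 μ σ q + rho2Y μ σ q δ) * Real.exp (-(rho1Y μ σ q δ) * x)))) * hmerge1 z
  rw [setIntegral_congr_fun measurableSet_Ioi (fun z _ => hpt z)]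
  rw [integral_add
    (((zg_integrable (r*sD) (σ^2*r) hσ2r).const_mul _).integrableOn)
    (((zg_integrable (-(r*sD)) (σ^2*r) hσ2r).const_mul _).integrableOn)]
  rw [integral_const_mul, integral_const_mul]
  rw [gauss_first_moment (r*sD) (σ^2*r) hσ2r, gauss_first_moment (-(r*sD)) (σ^2*r) hσ2r]
  have hs1 : Real.sqrt (σ^2*r) = σ * Real.sqrt r := by
    rw [Real.sqrt_mul (by positivity : (0:ℝ) ≤ σ^2), Real.sqrt_sq hσ.le]
  rw [show ((-(r*sD))^2 : ℝ) = (r*sD)^2 by ring, hs1]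
  rw [show Real.sqrt (2*Real.pi*(σ^2*r)) = Real.sqrt (2*Real.pi*σ^2*r) by rw [← mul_assoc]]
  have hΦ : stdNormalCDF (r*sD/(σ*Real.sqrt r)) = 1 - stdNormalCDF (-(r*sD)/(σ*Real.sqrt r)) := by
    have h := stdNormalCDF_add_neg (r*sD/(σ*Real.sqrt r))
    rw [show -(r*sD/(σ*Real.sqrt r)) = -(r*sD)/(σ*Real.sqrt r) by ring] at h
    linarith
  rw [hΦ]
  have hsum : σ^2*(rho1 μ σ q + rho2 μ σ q) = 2*sD := by
    linear_combination hσr1 + hσr2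
  have hWWq : WWq μ σ q δ x = 2/(σ^2*(rho1Y μ σ q δ + rho2Y μ σ q δ)) *
      (Real.exp (rho2Y μ σ q δ * x) - Real.exp (-(rho1Y μ σ q δ) * x)) := by
    simp only [WWq, Wq, rho, rho1Y, rho2Y]
  rw [hWWq]
  simp only [rho, rhoY]
  have hfc := final_core (rho1 μ σ q) (rho2 μ σ q) (rho1Y μ σ q δ) (rho2Y μ σ q δ) sD σ r
    (Real.exp (rho2Y μ σ q δ * x)) (Real.exp (-(rho1Y μ σ q δ) * x))
    (Real.exp (q*r)) (Real.exp (-(r*sD)^2/(2*(σ^2*r)))) (Real.exp (-(r*μ^2)/(2*σ^2)))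
    (stdNormalCDF (-(r*sD)/(σ*Real.sqrt r))) (Real.sqrt (2*Real.pi*σ^2*r))
    hσ' hr' (by positivity) (add_pos h1Yp h2Yp).ne' (add_pos h1p h2p).ne'
    hQG hsum
  linear_combination hfc
end

section
/- Let μ ∈ ℝ, σ > 0, q > 0, r > 0, and let W^{(q)} be the explicit q-scale function of the linear Brownian motion model. Then ∫₀^∞ W^{(q)}(z) (z/r) (2πσ²r)^{−1/2} e^{−(z−μr)²/(2σ²r)} dz = e^{qr}. -/
open MeasureTheory Real

lemma aux_odd (b : ℝ) : ∫ x : ℝ, x * Real.exp (-b * x^2) = 0 := by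
  have h := MeasureTheory.integral_neg_eq_self (fun x : ℝ => x * Real.exp (-b * x^2)) volume
  simp only [neg_mul, neg_sq, integral_neg] at h
  simp only [neg_mul] at h ⊢
  linarith

lemma aux_integrable (v a : ℝ) (hv : 0 < v) :
    Integrable (fun z : ℝ => z * Real.exp (-(z - a)^2 / (2*v))) := by
  have hb : 0 < (2*v)⁻¹ := by positivity
  have h : Integrable (fun x : ℝ => (x + a) * Real.exp (-(2*v)⁻¹ * x^2)) := by
    have := (integrable_mul_exp_neg_mul_sq hb).add ((integrable_exp_neg_mul_sq hb).const_mul a)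
    refine this.congr (Filter.Eventually.of_forall fun x => ?_)
    simp only [Pi.add_apply]; ring
  have := h.comp_sub_right a
  refine this.congr (Filter.Eventually.of_forall fun z => ?_)
  have h2 : -(2*v)⁻¹ * (z - a)^2 = -(z - a)^2 / (2*v) := by field_simp
  simp only [sub_add_cancel, h2]

lemma aux_moment (v a : ℝ) (hv : 0 < v) :
    ∫ z : ℝ, z * Real.exp (-(z - a)^2 / (2*v)) = a * Real.sqrt (2*π*v) := by
  have hb : 0 < (2*v)⁻¹ := by positivity
  have hshift := integral_add_right_eq_self (μ := volume)
    (fun z : ℝ => z * Real.exp (-(z - a)^2 / (2*v))) a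
  rw [← hshift]
  have key : ∀ x : ℝ, (x + a) * Real.exp (-(x + a - a)^2 / (2*v))
      = x * Real.exp (-(2*v)⁻¹ * x^2) + a * Real.exp (-(2*v)⁻¹ * x^2) := by
    intro x
    have h2 : -(x + a - a)^2 / (2*v) = -(2*v)⁻¹ * x^2 := by field_simp; ring
    rw [h2]; ring
  simp only [key]
  rw [integral_add (integrable_mul_exp_neg_mul_sq hb)
    ((integrable_exp_neg_mul_sq hb).const_mul a), aux_odd, zero_add,
    MeasureTheory.integral_const_mul, integral_gaussian]
  congr 2
  field_simp

theorem integral_Wq_gaussian_eq_exp_qr (μ σ q r : ℝ) (hσ : 0 < σ) (hq : 0 < q) (hr : 0 < r) :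
    (∫ z in Set.Ioi (0 : ℝ),
        Wq μ σ q z * (z / r) * (Real.sqrt (2 * Real.pi * σ ^ 2 * r))⁻¹ *
          Real.exp (-(z - μ * r) ^ 2 / (2 * σ ^ 2 * r)))
      = Real.exp (q * r) := by
  set Δ := Real.sqrt (μ ^ 2 + 2 * q * σ ^ 2) with hΔdef
  have hpos : 0 < μ ^ 2 + 2 * q * σ ^ 2 := by positivity
  have hΔpos : 0 < Δ := Real.sqrt_pos.mpr hpos
  have hΔsq : Δ ^ 2 = μ ^ 2 + 2 * q * σ ^ 2 := Real.sq_sqrt hpos.le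
  set a := r * Δ with hadef
  set v := σ ^ 2 * r with hvdef
  have hv : 0 < v := by positivity
  set c := (Real.sqrt (2 * Real.pi * σ ^ 2 * r))⁻¹ with hcdef
  set K := c * Real.exp (q * r) / (Δ * r) with hKdef
  -- pointwise identity
  have hpt : ∀ z : ℝ,
      Wq μ σ q z * (z / r) * c * Real.exp (-(z - μ * r) ^ 2 / (2 * σ ^ 2 * r))
        = K * (z * Real.exp (-(z - a)^2 / (2*v)) - z * Real.exp (-(z + a)^2 / (2*v))) := by
    intro z
    have hσ2 : (σ:ℝ) ^ 2 ≠ 0 := by positivity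
    have hrr : (r:ℝ) ≠ 0 := hr.ne'
    have hsum : σ ^ 2 * rho μ σ q = 2 * Δ := by
      rw [rho, rho1, rho2, ← hΔdef]; field_simp; ring
    have he1 : Real.exp (rho2 μ σ q * z) * Real.exp (-(z - μ * r) ^ 2 / (2 * σ ^ 2 * r))
        = Real.exp (q * r) * Real.exp (-(z - a)^2 / (2*v)) := by
      rw [← Real.exp_add, ← Real.exp_add]
      congr 1
      rw [rho2, ← hΔdef, hadef, hvdef]
      field_simp
      linear_combination (r^2) * hΔsq
    have he2 : Real.exp (-(rho1 μ σ q) * z) * Real.exp (-(z - μ * r) ^ 2 / (2 * σ ^ 2 * r))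
        = Real.exp (q * r) * Real.exp (-(z + a)^2 / (2*v)) := by
      rw [← Real.exp_add, ← Real.exp_add]
      congr 1
      rw [rho1, ← hΔdef, hadef, hvdef]
      field_simp
      linear_combination (r^2) * hΔsq
    have expand : (Real.exp (rho2 μ σ q * z) - Real.exp (-(rho1 μ σ q) * z))
        * Real.exp (-(z - μ * r) ^ 2 / (2 * σ ^ 2 * r))
        = Real.exp (q * r) * (Real.exp (-(z - a)^2 / (2*v)) - Real.exp (-(z + a)^2 / (2*v))) := by
      rw [sub_mul, he1, he2]; ring
    calc Wq μ σ q z * (z / r) * c * Real.exp (-(z - μ * r) ^ 2 / (2 * σ ^ 2 * r))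
        = (z / r) * (2 / (2 * Δ)) * ((Real.exp (rho2 μ σ q * z) - Real.exp (-(rho1 μ σ q) * z))
            * Real.exp (-(z - μ * r) ^ 2 / (2 * σ ^ 2 * r))) * c := by
          rw [Wq, hsum]; ring
      _ = (z / r) * (2 / (2 * Δ)) * (Real.exp (q * r)
            * (Real.exp (-(z - a)^2 / (2*v)) - Real.exp (-(z + a)^2 / (2*v)))) * c := by
          rw [expand]
      _ = K * (z * Real.exp (-(z - a)^2 / (2*v)) - z * Real.exp (-(z + a)^2 / (2*v))) := by
          rw [hKdef]; field_simp
  rw [setIntegral_congr_fun measurableSet_Ioi (fun z _ => hpt z)]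
  rw [integral_const_mul]
  -- the two integrals
  have hintp : Integrable (fun z : ℝ => z * Real.exp (-(z - a)^2 / (2*v))) := aux_integrable v a hv
  have hintm : Integrable (fun z : ℝ => z * Real.exp (-(z + a)^2 / (2*v))) := by
    simpa [sub_neg_eq_add] using aux_integrable v (-a) hv
  have hsub : (∫ z in Set.Ioi (0:ℝ),
        (z * Real.exp (-(z - a)^2 / (2*v)) - z * Real.exp (-(z + a)^2 / (2*v))))
      = (∫ z in Set.Ioi (0:ℝ), z * Real.exp (-(z - a)^2 / (2*v)))
        - ∫ z in Set.Ioi (0:ℝ), z * Real.exp (-(z + a)^2 / (2*v)) :=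
    integral_sub hintp.integrableOn hintm.integrableOn
  have hrefl : (∫ z in Set.Ioi (0:ℝ), z * Real.exp (-(z + a)^2 / (2*v)))
      = - ∫ z in Set.Iic (0:ℝ), z * Real.exp (-(z - a)^2 / (2*v)) := by
    have := integral_comp_neg_Ioi (0:ℝ) (fun z => z * Real.exp (-(z - a)^2 / (2*v)))
    simp only [neg_zero] at this
    rw [← this, ← integral_neg]
    congr 1 with z
    have : (-z - a)^2 = (z + a)^2 := by ring
    rw [this]; ring
  have hfull : (∫ z in Set.Iic (0:ℝ), z * Real.exp (-(z - a)^2 / (2*v)))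
      + (∫ z in Set.Ioi (0:ℝ), z * Real.exp (-(z - a)^2 / (2*v)))
      = ∫ z : ℝ, z * Real.exp (-(z - a)^2 / (2*v)) :=
    intervalIntegral.integral_Iic_add_Ioi hintp.integrableOn hintp.integrableOn
  rw [hsub, hrefl, sub_neg_eq_add, add_comm, hfull, aux_moment v a hv]
  -- final arithmetic
  rw [hKdef, hadef, hvdef, hcdef]
  have hs : Real.sqrt (2 * π * (σ ^ 2 * r)) = Real.sqrt (2 * Real.pi * σ ^ 2 * r) := by
    ring_nf
  rw [hs]
  have hspos : 0 < Real.sqrt (2 * Real.pi * σ ^ 2 * r) := by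
    apply Real.sqrt_pos.mpr; positivity
  field_simp
end
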